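/- Let U, V, U', V' be independent real Gaussian random variables, each with mean 0 and variance 1/2, let A = √(U² + V²) and A' = √(U'² + V'²) (so A, A' are i.i.d. Rayleigh-distributed moduli of standard complex Gaussians), and let ω be a real random variable independent of (A, A') with density f_ω(x) = (1/(2π))·(1 - |x|/(2π)) on [-2π, 2π]. Then the complex random variable W = A - A'·e^{-iω} satisfies E[W] = √π/2 and E[|W - E[W]|²] = (8 - π)/4. -/

import Mathlib

open MeasureTheory ProbabilityTheory Real

/-- The triangular density of the difference of two independent uniform `(0, 2π)` phases. -/
noncomputable def omegaPDF (x : ℝ) : ℝ :=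
  if x ∈ Set.Icc (-(2 * Real.pi)) (2 * Real.pi) then
    (1 / (2 * Real.pi)) * (1 - |x| / (2 * Real.pi))
  else 0

/-- The joint law of `(U, V, U', V', ω)`: four independent real Gaussians with mean `0`
and variance `1/2`, and an independent phase difference `ω` with density `omegaPDF`. -/
noncomputable def jointLaw : Measure (ℝ × ℝ × ℝ × ℝ × ℝ) :=
  (gaussianReal 0 (1/2 : NNReal)).prod
    ((gaussianReal 0 (1/2 : NNReal)).prod
      ((gaussianReal 0 (1/2 : NNReal)).prod
        ((gaussianReal 0 (1/2 : NNReal)).prod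
          (volume.withDensity fun x => ENNReal.ofReal (omegaPDF x)))))

/-- `W = A - A' e^{-iω}` where `A = √(U²+V²)`, `A' = √(U'²+V'²)` are the Rayleigh moduli. -/
noncomputable def W (p : ℝ × ℝ × ℝ × ℝ × ℝ) : ℂ :=
  (Real.sqrt (p.1 ^ 2 + p.2.1 ^ 2) : ℂ) -
    (Real.sqrt (p.2.2.1 ^ 2 + p.2.2.2.1 ^ 2) : ℂ) * Complex.exp (-Complex.I * (p.2.2.2.2 : ℂ))

open scoped NNReal
open Complex (I)

/-!
Write `A = |Z|` for a standard complex Gaussian `Z`. In polar coordinates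
`E[A^q] = Γ(q/2 + 1)`, so `E[A] = √π/2` and `E[A²] = 1`. The phase `ω` has
`E[e^{-iω}] = 0`: the density is even, which kills `E[sin ω]`, and `E[cos ω] = 0` by direct
integration (equivalently, `|E[e^{iθ}]|² = 0` for a uniform phase `θ`). By independence
`E[W] = E[A] - E[A'] E[e^{-iω}] = E[A]`, and expanding
`|A - m - A' e^{-iω}|² = (A - m)² + A'² - 2 (A - m) A' cos ω` with `m = E[A]`,
the cross term has mean `E[A - m] · E[A' cos ω] = 0`, so `Var W = Var A + E[A'²] = 2 - π/4`.
-/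

local notation "γ" => gaussianReal 0 (1/2 : ℝ≥0)

theorem integral_prod_gaussianReal_half {E : Type*} [NormedAddCommGroup E] [NormedSpace ℝ E]
    (g : ℝ × ℝ → E) :
    ∫ z, g z ∂(Measure.prod γ γ) = ∫ x : ℂ, (π⁻¹ * rexp (-‖x‖ ^ 2)) • g (x.re, x.im) := by
  rw [gaussianReal_of_var_ne_zero _ (by norm_num),
    prod_withDensity (measurable_gaussianPDF _ _) (measurable_gaussianPDF _ _),
    integral_withDensity_eq_integral_toReal_smul (by fun_prop)
      (ae_of_all _ fun _ => ENNReal.mul_lt_top gaussianPDF_lt_top gaussianPDF_lt_top),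
    ← Measure.volume_eq_prod,
    ← Complex.volume_preserving_equiv_real_prod.integral_comp']
  congr 1 with x
  simp only [Complex.measurableEquivRealProd_apply, ENNReal.toReal_mul, toReal_gaussianPDF,
    gaussianPDFReal_def, Complex.sq_norm, Complex.normSq_apply]
  congr 1
  rw [mul_mul_mul_comm, ← Real.exp_add, ← mul_inv, ← sq, Real.sq_sqrt (by positivity)]
  norm_num
  ring_nf

theorem integral_sqrt_rpow_prod_gaussianReal_half {q : ℝ} (hq : -2 < q) :
    ∫ z, √(z.1 ^ 2 + z.2 ^ 2) ^ q ∂(Measure.prod γ γ) = Real.Gamma (q / 2 + 1) := by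
  have hnorm (x : ℂ) : √(x.re ^ 2 + x.im ^ 2) = ‖x‖ := by
    rw [Complex.norm_def, Complex.normSq_apply]; ring_nf
  have hsq (x : ℂ) : ‖x‖ ^ 2 = ‖x‖ ^ (2 : ℝ) := (rpow_two _).symm
  simp_rw [integral_prod_gaussianReal_half, hnorm, smul_eq_mul, hsq, mul_assoc,
    integral_const_mul, mul_comm (rexp _), ← neg_one_mul (‖_‖ ^ (2:ℝ)),
    Complex.integral_rpow_mul_exp_neg_mul_rpow one_le_two hq one_pos, one_rpow]
  field_simp

theorem integral_sqrt_prod_gaussianReal_half :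
    ∫ z, √(z.1 ^ 2 + z.2 ^ 2) ∂(Measure.prod γ γ) = √π / 2 := by
  have h := integral_sqrt_rpow_prod_gaussianReal_half (q := 1) (by norm_num)
  simp only [rpow_one] at h
  rw [h, Real.Gamma_add_one (by norm_num), Real.Gamma_one_half_eq]
  ring

theorem integral_sq_sqrt_prod_gaussianReal_half :
    ∫ z, √(z.1 ^ 2 + z.2 ^ 2) ^ 2 ∂(Measure.prod γ γ) = 1 := by
  have h := integral_sqrt_rpow_prod_gaussianReal_half (q := 2) (by norm_num)
  simp only [rpow_two] at h
  rw [h]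
  norm_num

theorem memLp_sqrt_prod_gaussianReal_half :
    MemLp (fun z : ℝ × ℝ => √(z.1 ^ 2 + z.2 ^ 2)) 2 (Measure.prod γ γ) :=
  (memLp_two_iff_integrable_sq (by fun_prop)).mpr
    (.of_integral_ne_zero (by rw [integral_sq_sqrt_prod_gaussianReal_half]; exact one_ne_zero))

theorem omegaPDF_nonneg (x : ℝ) : 0 ≤ omegaPDF x := by
  unfold omegaPDF
  split_ifs with h
  · have : 0 ≤ 1 - |x| / (2 * π) :=
      sub_nonneg.mpr (div_le_one_of_le₀ (abs_le.mpr h) (by positivity))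
    positivity
  · exact le_rfl

theorem omegaPDF_neg (x : ℝ) : omegaPDF (-x) = omegaPDF x := by
  simp only [omegaPDF, Set.mem_Icc, abs_neg, neg_le, neg_neg, and_comm]

theorem measurable_omegaPDF : Measurable omegaPDF :=
  Measurable.ite measurableSet_Icc (by fun_prop) measurable_const

theorem integral_omegaPDF_mul_of_odd {h : ℝ → ℝ} (hh : h.Odd) : ∫ x, omegaPDF x * h x = 0 := by
  have := integral_neg_eq_self (fun x => omegaPDF x * h x) volume
  simp only [omegaPDF_neg, hh _, mul_neg, integral_neg] at this
  linarith

theorem integral_omegaPDF_mul_of_even {h : ℝ → ℝ} (hc : Continuous h) (hh : h.Even) :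
    ∫ x, omegaPDF x * h x = π⁻¹ * ∫ x in 0..2 * π, (1 - x / (2 * π)) * h x := by
  set F : ℝ → ℝ := fun x => 1 / (2 * π) * (1 - |x| / (2 * π)) * h x
  have hF : IntervalIntegrable F volume (-(2 * π)) 0 ∧ IntervalIntegrable F volume 0 (2 * π) :=
    have : Continuous F := by fun_prop
    ⟨this.intervalIntegrable _ _, this.intervalIntegrable _ _⟩
  have hsymm : ∫ x in -(2 * π)..0, F x = ∫ x in 0..2 * π, F x := by
    simpa [F, hh _] using (intervalIntegral.integral_comp_neg (a := 0) (b := 2 * π) F).symm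
  have hpos : ∫ x in 0..2 * π, F x = (2 * π)⁻¹ * ∫ x in 0..2 * π, (1 - x / (2 * π)) * h x := by
    rw [← intervalIntegral.integral_const_mul]
    refine intervalIntegral.integral_congr fun x hx => ?_
    rw [Set.uIcc_of_le (by positivity)] at hx
    simp only [F, abs_of_nonneg hx.1]
    ring
  calc ∫ x, omegaPDF x * h x
      = ∫ x in Set.Icc (-(2 * π)) (2 * π), F x := by
        rw [← integral_indicator measurableSet_Icc]
        congr 1 with x
        simp only [omegaPDF, Set.indicator_apply, F]
        split_ifs <;> simp
    _ = ∫ x in -(2 * π)..2 * π, F x := by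
        rw [integral_Icc_eq_integral_Ioc, intervalIntegral.integral_of_le (by linarith [pi_pos])]
    _ = π⁻¹ * ∫ x in 0..2 * π, (1 - x / (2 * π)) * h x := by
        rw [← intervalIntegral.integral_add_adjacent_intervals hF.1 hF.2, hsymm, hpos]
        ring

theorem integral_omegaPDF : ∫ x, omegaPDF x = 1 := by
  have := integral_omegaPDF_mul_of_even continuous_const (fun _ => rfl) (h := fun _ => (1 : ℝ))
  simp only [mul_one] at this
  rw [this, intervalIntegral.integral_sub intervalIntegrable_const
    ((continuous_id'.div_const (2 * π)).intervalIntegrable 0 (2 * π)),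
    intervalIntegral.integral_div, integral_id, intervalIntegral.integral_const]
  field_simp
  ring

theorem integral_omegaPDF_mul_cos : ∫ x, omegaPDF x * cos x = 0 := by
  rw [integral_omegaPDF_mul_of_even continuous_cos cos_neg,
    intervalIntegral.integral_eq_sub_of_hasDerivAt
      (f := fun x => (1 - x / (2 * π)) * sin x - cos x / (2 * π)) (fun x _ => ?_)
      ((by fun_prop : Continuous _).intervalIntegrable _ _)]
  · simp
  · exact ((((hasDerivAt_id x).div_const (2 * π)).const_sub 1).mul (hasDerivAt_sin x)).sub
      ((hasDerivAt_cos x).div_const (2 * π)) |>.congr_deriv (by simp only [id]; ring)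

noncomputable def omegaLaw : Measure ℝ := volume.withDensity fun x => ENNReal.ofReal (omegaPDF x)

theorem integral_omegaLaw {E : Type*} [NormedAddCommGroup E] [NormedSpace ℝ E] (g : ℝ → E) :
    ∫ x, g x ∂omegaLaw = ∫ x, omegaPDF x • g x := by
  rw [omegaLaw, integral_withDensity_eq_integral_toReal_smul
    measurable_omegaPDF.ennreal_ofReal
    (ae_of_all _ fun _ => ENNReal.ofReal_lt_top)]
  simp only [ENNReal.toReal_ofReal (omegaPDF_nonneg _)]

instance : IsProbabilityMeasure omegaLaw := by
  have hint : Integrable omegaPDF := .of_integral_ne_zero (by simp [integral_omegaPDF])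
  constructor
  rw [omegaLaw, withDensity_apply _ MeasurableSet.univ, Measure.restrict_univ,
    ← ofReal_integral_eq_lintegral_ofReal hint (ae_of_all _ omegaPDF_nonneg), integral_omegaPDF,
    ENNReal.ofReal_one]

theorem re_cexp_neg_I_mul (θ : ℝ) : (Complex.exp (-I * θ)).re = cos θ := by
  simp [Complex.exp_re]

theorem im_cexp_neg_I_mul (θ : ℝ) : (Complex.exp (-I * θ)).im = -sin θ := by
  simp [Complex.exp_im]

theorem integrable_cexp_neg_I_mul (ν : Measure ℝ) [IsFiniteMeasure ν] :
    Integrable (fun θ : ℝ => Complex.exp (-I * θ)) ν :=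
  .of_bound (by fun_prop) 1 (ae_of_all _ fun θ => by simp [Complex.norm_exp])

theorem integral_cexp_neg_I_mul_omegaLaw : ∫ θ, Complex.exp (-I * θ) ∂omegaLaw = 0 := by
  have hint := integrable_cexp_neg_I_mul omegaLaw
  apply Complex.ext
  · have := integral_re hint
    simp only [RCLike.re_to_complex, re_cexp_neg_I_mul] at this
    rw [Complex.zero_re, ← this, integral_omegaLaw]
    exact integral_omegaPDF_mul_cos
  · have := integral_im hint
    simp only [RCLike.im_to_complex, im_cexp_neg_I_mul, integral_neg] at this
    rw [Complex.zero_im, ← this, integral_omegaLaw, neg_eq_zero]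
    exact integral_omegaPDF_mul_of_odd sin_neg

theorem norm_sub_mul_cexp_neg_I_mul_sq (s t θ : ℝ) :
    ‖(s : ℂ) - t * Complex.exp (-I * θ)‖ ^ 2 = s ^ 2 + t ^ 2 - 2 * (s * (t * cos θ)) := by
  rw [Complex.sq_norm, Complex.normSq_apply]
  simp only [Complex.sub_re, Complex.sub_im, Complex.mul_re, Complex.mul_im, Complex.ofReal_re,
    Complex.ofReal_im, re_cexp_neg_I_mul, im_cexp_neg_I_mul]
  nlinarith [sin_sq_add_cos_sq θ]

noncomputable def subRotated {X Y : Type*} (a : X → ℝ) (b : Y → ℝ) (q : X × Y × ℝ) : ℂ :=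
  a q.1 - b q.2.1 * Complex.exp (-I * q.2.2)

section
variable {X Y : Type*} [MeasurableSpace X] [MeasurableSpace Y] {μ : Measure X} {μ' : Measure Y}
  {ν : Measure ℝ} [IsProbabilityMeasure μ] [IsProbabilityMeasure μ'] [IsProbabilityMeasure ν]

theorem integral_subRotated {a : X → ℝ} {b : Y → ℝ} (ha : Integrable a μ) (hb : Integrable b μ')
    (hν : ∫ θ, Complex.exp (-I * θ) ∂ν = 0) :
    ∫ q, subRotated a b q ∂(μ.prod (μ'.prod ν)) = ∫ x, a x ∂μ := by
  have h1 : Integrable (fun q : X × Y × ℝ => (a q.1 : ℂ)) (μ.prod (μ'.prod ν)) :=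
    (ha.ofReal (𝕜 := ℂ)).comp_fst _
  have h2 : Integrable (fun q : X × Y × ℝ => (b q.2.1 : ℂ) * Complex.exp (-I * q.2.2))
      (μ.prod (μ'.prod ν)) :=
    (hb.ofReal.mul_prod (integrable_cexp_neg_I_mul ν)).comp_snd μ
  unfold subRotated
  rw [integral_sub h1 h2,
    integral_fun_fst (fun x => (a x : ℂ)),
    integral_fun_snd (fun y : Y × ℝ => (b y.1 : ℂ) * Complex.exp (-I * y.2)),
    integral_prod_mul (fun y => (b y : ℂ)) (fun θ : ℝ => Complex.exp (-I * θ)), hν]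
  simp [integral_complex_ofReal]

theorem integral_norm_subRotated_sub_integral_sq {a : X → ℝ} {b : Y → ℝ} (ha : MemLp a 2 μ)
    (hb : MemLp b 2 μ') (hν : ∫ θ, Complex.exp (-I * θ) ∂ν = 0) :
    ∫ q, ‖subRotated a b q - ∫ q', subRotated a b q' ∂(μ.prod (μ'.prod ν))‖ ^ 2
      ∂(μ.prod (μ'.prod ν)) = Var[a; μ] + ∫ y, b y ^ 2 ∂μ' := by
  have ha1 := ha.integrable one_le_two
  rw [integral_subRotated ha1 (hb.integrable one_le_two) hν]
  set m := ∫ x, a x ∂μ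
  have hcentered : ∫ x, (a x - m) ∂μ = 0 := by
    rw [integral_sub ha1 (integrable_const m)]; simp [m]
  have hpt (q : X × Y × ℝ) : ‖subRotated a b q - m‖ ^ 2
      = (a q.1 - m) ^ 2 + b q.2.1 ^ 2 - 2 * ((a q.1 - m) * (b q.2.1 * cos q.2.2)) := by
    rw [subRotated, ← norm_sub_mul_cexp_neg_I_mul_sq]; push_cast; ring_nf
  have h1 : Integrable (fun q : X × Y × ℝ => (a q.1 - m) ^ 2) (μ.prod (μ'.prod ν)) :=
    (ha.sub (memLp_const m)).integrable_sq.comp_fst _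
  have h2 : Integrable (fun q : X × Y × ℝ => b q.2.1 ^ 2) (μ.prod (μ'.prod ν)) :=
    (hb.integrable_sq.comp_fst ν).comp_snd μ
  have h3 : Integrable (fun q : X × Y × ℝ => (a q.1 - m) * (b q.2.1 * cos q.2.2))
      (μ.prod (μ'.prod ν)) :=
    (ha1.sub (integrable_const m)).mul_prod ((hb.integrable one_le_two).mul_prod
      (.of_bound (by fun_prop) 1 (ae_of_all _ fun θ => by simpa using abs_cos_le_one θ)))
  have h12 : Integrable (fun q : X × Y × ℝ => (a q.1 - m) ^ 2 + b q.2.1 ^ 2)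
      (μ.prod (μ'.prod ν)) := h1.add h2
  simp_rw [hpt]
  rw [integral_sub h12 (h3.const_mul 2), integral_add h1 h2, integral_const_mul,
    integral_prod_mul (fun x => a x - m) (fun y : Y × ℝ => b y.1 * cos y.2), hcentered,
    integral_fun_fst (fun x => (a x - m) ^ 2), integral_fun_snd (fun y : Y × ℝ => b y.1 ^ 2),
    integral_fun_fst (fun y => b y ^ 2), variance_eq_integral ha.aestronglyMeasurable.aemeasurable]
  simp [m]
end

noncomputable def regroup {X₁ X₂ X₃ X₄ X₅ : Type*} [MeasurableSpace X₁] [MeasurableSpace X₂]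
    [MeasurableSpace X₃] [MeasurableSpace X₄] [MeasurableSpace X₅] :
    ((X₁ × X₂) × (X₃ × X₄) × X₅) ≃ᵐ X₁ × X₂ × X₃ × X₄ × X₅ :=
  (MeasurableEquiv.prodCongr (.refl _) .prodAssoc).trans .prodAssoc

theorem measurePreserving_regroup {X₁ X₂ X₃ X₄ X₅ : Type*} [MeasurableSpace X₁]
    [MeasurableSpace X₂] [MeasurableSpace X₃] [MeasurableSpace X₄] [MeasurableSpace X₅]
    (μ₁ : Measure X₁) (μ₂ : Measure X₂) (μ₃ : Measure X₃) (μ₄ : Measure X₄) (μ₅ : Measure X₅)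
    [SFinite μ₁] [SFinite μ₂] [SFinite μ₃] [SFinite μ₄] [SFinite μ₅] :
    MeasurePreserving regroup ((μ₁.prod μ₂).prod ((μ₃.prod μ₄).prod μ₅))
      (μ₁.prod (μ₂.prod (μ₃.prod (μ₄.prod μ₅)))) :=
  (measurePreserving_prodAssoc μ₁ μ₂ _).comp
    ((MeasurePreserving.id _).prod (measurePreserving_prodAssoc μ₃ μ₄ μ₅))

theorem W_regroup (q : (ℝ × ℝ) × (ℝ × ℝ) × ℝ) :
    W (regroup q) =
      subRotated (fun z : ℝ × ℝ => √(z.1 ^ 2 + z.2 ^ 2)) (fun z => √(z.1 ^ 2 + z.2 ^ 2)) q :=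
  rfl

/-- Mean and variance of `W = A - A' e^{-iω}`: `E[W] = √π/2` and
`E[|W - E[W]|²] = (8 - π)/4`. -/
theorem mean_var_W :
    (∫ p, W p ∂jointLaw) = (Real.sqrt Real.pi / 2 : ℂ) ∧
    (∫ p, ‖W p - ∫ q, W q ∂jointLaw‖ ^ 2 ∂jointLaw) = (8 - Real.pi) / 4 := by
  have hmp : MeasurePreserving regroup ((Measure.prod γ γ).prod ((Measure.prod γ γ).prod omegaLaw))
      jointLaw := measurePreserving_regroup _ _ _ _ _
  have hR := memLp_sqrt_prod_gaussianReal_half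
  refine ⟨?_, ?_⟩
  · rw [← hmp.integral_comp', funext W_regroup,
      integral_subRotated (hR.integrable one_le_two) (hR.integrable one_le_two)
        integral_cexp_neg_I_mul_omegaLaw, integral_sqrt_prod_gaussianReal_half]
    norm_num
  rw [← hmp.integral_comp' (fun p => ‖W p - ∫ q, W q ∂jointLaw‖ ^ 2), ← hmp.integral_comp' W]
  simp only [W_regroup]
  rw [integral_norm_subRotated_sub_integral_sq hR hR integral_cexp_neg_I_mul_omegaLaw,
    variance_eq_sub hR]
  simp only [Pi.pow_apply]
  rw [integral_sq_sqrt_prod_gaussianReal_half, integral_sqrt_prod_gaussianReal_half, div_pow,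
    sq_sqrt pi_pos.le]
  ring
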